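/- There is no solution to equality negation even restricted to connectivity reasoning: if δ : P → O is a color-preserving simplicial map from a connected protocol graph P containing the subdivisions of all input edges with distinct input values, and if δ maps every such subdivided edge into the set of output edges with equal decisions, then δ maps the whole connected subgraph Ξ(G) into a single output edge {(B,d),(W,d)} for some fixed d ∈ {0,1}. In particular δ(Ξ(B,v)) = (B,d) and δ(Ξ(W,v)) = (W,d) for all solo-execution vertices. -/
import Mathlib


inductive Proc : Type where
  | B | W
deriving DecidableEq

/-- Vertices of the `m`-fold subdivision of the equality-negation input graph:
the original vertices `(p,i)` together with interior vertices of each subdivided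
input edge `e = {(B,i),(W,j)}` at positions `0 < k < m`. -/
inductive SubV (m : ℕ) : Type where
  | orig : Proc → Fin 3 → SubV m
  | inner : Fin 3 × Fin 3 → ℕ → SubV m
deriving DecidableEq

/-- The `k`-th vertex (0 ≤ k ≤ m) on the subdivision of the input edge
`e = {(B, e.1), (W, e.2)}`: position `0` is the original `B`-endpoint, position `m`
the original `W`-endpoint. -/
def pvtx (m : ℕ) (e : Fin 3 × Fin 3) (k : ℕ) : SubV m :=
  if k = 0 then .orig .B e.1 else if k = m then .orig .W e.2 else .inner e k

/-- Colors alternate along each subdivided edge, starting with `B` at position 0. -/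
def scolor {m : ℕ} : SubV m → Proc
  | .orig p _ => p
  | .inner _ k => if Even k then .B else .W

/-- A subdivision vertex inherits the input value of the original endpoint of its color. -/
def sinput {m : ℕ} : SubV m → Fin 3
  | .orig _ i => i
  | .inner e k => if Even k then e.1 else e.2

/-- connectivity reasoning: if δ is a color-preserving simplicial map from the
3^N-layer protocol graph (the subdivision of the input graph, which contains the connected
subgraph Ξ(G) formed by the subdivisions of all input edges with distinct inputs) to the
output graph, and δ maps every edge of the subdivision of a distinct-input edge to an
output edge with equal decisions, then δ maps all of Ξ(G) into a single output edge
{(B,d),(W,d)} for one fixed d; in particular every solo-execution (original) vertex (p,v)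
is sent to (p,d). -/
theorem eqneg_connectivity_argument (N : ℕ) (δ : SubV (3 ^ N) → Proc × Fin 2)
    (hcol : ∀ v, (δ v).1 = scolor v)
    (heq : ∀ e : Fin 3 × Fin 3, e.1 ≠ e.2 → ∀ k < 3 ^ N,
      (δ (pvtx (3 ^ N) e k)).2 = (δ (pvtx (3 ^ N) e (k + 1))).2) :
    ∃ d : Fin 2,
      (∀ e : Fin 3 × Fin 3, e.1 ≠ e.2 → ∀ k ≤ 3 ^ N, (δ (pvtx (3 ^ N) e k)).2 = d) ∧
      (∀ (p : Proc) (v : Fin 3), δ (SubV.orig p v) = (p, d)) := by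
  have hm : 3 ^ N ≠ 0 := by positivity
  -- constancy along each subdivided edge
  have const : ∀ e : Fin 3 × Fin 3, e.1 ≠ e.2 → ∀ k ≤ 3 ^ N,
      (δ (pvtx (3 ^ N) e k)).2 = (δ (pvtx (3 ^ N) e 0)).2 := by
    intro e he k
    induction k with
    | zero => intro _; rfl
    | succ n ih =>
      intro h
      have hn : n < 3 ^ N := h
      rw [← heq e he n hn]
      exact ih (Nat.le_of_lt hn)
  have p0 : ∀ e : Fin 3 × Fin 3, pvtx (3 ^ N) e 0 = SubV.orig Proc.B e.1 := by
    intro e; simp [pvtx]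
  have pm : ∀ e : Fin 3 × Fin 3, pvtx (3 ^ N) e (3 ^ N) = SubV.orig Proc.W e.2 := by
    intro e; simp [pvtx, hm]
  have key : ∀ i j : Fin 3, i ≠ j →
      (δ (SubV.orig Proc.B i)).2 = (δ (SubV.orig Proc.W j)).2 := by
    intro i j hij
    have := const (i, j) hij (3 ^ N) le_rfl
    rw [p0, pm] at this
    exact this.symm
  set d : Fin 2 := (δ (SubV.orig Proc.B 0)).2 with hd
  have hall : ∀ (p : Proc) (v : Fin 3), (δ (SubV.orig p v)).2 = d := by
    intro p v
    have k01 := key 0 1 (by decide)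
    have k02 := key 0 2 (by decide)
    have k10 := key 1 0 (by decide)
    have k12 := key 1 2 (by decide)
    have k20 := key 2 0 (by decide)
    have k21 := key 2 1 (by decide)
    cases p <;> fin_cases v <;> simp_all
  refine ⟨d, ?_, ?_⟩
  · intro e he k hk
    rw [const e he k hk, p0]
    exact hall Proc.B e.1
  · intro p v
    have h1 := hcol (SubV.orig p v)
    have h2 := hall p v
    exact Prod.ext (by simpa [scolor] using h1) h2
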